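/- Let q = [a,b,c] be an integral binary quadratic form, let D = b²−4ac, and let f_q be the integral ternary quadratic form f_q(x,y,z) = x² + 4q(y,z) = [1, 4a, 4c, 4b, 0, 0]. Then disc(f_q) = 16D and adj(f_q) = [16D, −16c, −16a, 16b, 0, 0]; consequently content(adj(f_q)) = 16·gcd(a,b,c). In particular, if q is positive definite with content κ, then I₁(f_q) = −16κ and F_{f_q}^B = [−D/κ, c/κ, a/κ, −b/κ, 0, 0], whose restriction to x = 0 is the binary quadratic form (c/κ)y² − (b/κ)yz + (a/κ)z², which is GL₂(ℤ)-equivalent to the primitive binary form (1/κ)q. -/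

import Mathlib

/-- An integral binary quadratic form `[a,b,c]`, denoting `a*x² + b*x*y + c*y²`. -/
structure BinaryQF where
  a : ℤ
  b : ℤ
  c : ℤ

namespace BinaryQF

def eval (q : BinaryQF) (x y : ℤ) : ℤ := q.a * x ^ 2 + q.b * x * y + q.c * y ^ 2

def disc (q : BinaryQF) : ℤ := q.b ^ 2 - 4 * q.a * q.c

def content (q : BinaryQF) : ℤ := (Int.gcd (Int.gcd q.a q.b) q.c : ℤ)

def PosDef (q : BinaryQF) : Prop := 0 < q.a ∧ q.disc < 0

/-- `GL₂(ℤ)`-equivalence of binary quadratic forms. -/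
def EquivGL (q₁ q₂ : BinaryQF) : Prop :=
  ∃ M : Matrix (Fin 2) (Fin 2) ℤ, IsUnit M.det ∧
    ∀ x y : ℤ, q₁.eval (M 0 0 * x + M 0 1 * y) (M 1 0 * x + M 1 1 * y) = q₂.eval x y

end BinaryQF

/-- An integral ternary quadratic form `[a,b,c,r,s,t]`, denoting
`a*x² + b*y² + c*z² + r*y*z + s*x*z + t*x*y`. -/
structure TernaryQF where
  a : ℤ
  b : ℤ
  c : ℤ
  r : ℤ
  s : ℤ
  t : ℤ

namespace TernaryQF

def eval (f : TernaryQF) (x y z : ℤ) : ℤ :=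
  f.a * x ^ 2 + f.b * y ^ 2 + f.c * z ^ 2 + f.r * y * z + f.s * x * z + f.t * x * y

def content (f : TernaryQF) : ℤ :=
  (Int.gcd (Int.gcd (Int.gcd (Int.gcd (Int.gcd f.a f.b) f.c) f.r) f.s) f.t : ℤ)

def disc (f : TernaryQF) : ℤ :=
  -4 * f.a * f.b * f.c - f.r * f.s * f.t +
    f.a * f.r ^ 2 + f.b * f.s ^ 2 + f.c * f.t ^ 2

/-- The adjoint form: the form whose coefficient matrix is `-2 · adjugate(M(f))`. -/
def adj (f : TernaryQF) : TernaryQF :=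
  ⟨f.r ^ 2 - 4 * f.b * f.c,
   f.s ^ 2 - 4 * f.a * f.c,
   f.t ^ 2 - 4 * f.a * f.b,
   4 * f.a * f.r - 2 * f.s * f.t,
   4 * f.b * f.s - 2 * f.t * f.r,
   4 * f.c * f.t - 2 * f.r * f.s⟩

/-- The basic invariant `I₁(f) = -content(adj f)`. -/
def I₁ (f : TernaryQF) : ℤ := -f.adj.content

def sdiv (f : TernaryQF) (d : ℤ) : TernaryQF :=
  ⟨f.a / d, f.b / d, f.c / d, f.r / d, f.s / d, f.t / d⟩

/-- The Brandt reciprocal form `F_f^B = adj(f) / I₁(f)`. -/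
def FB (f : TernaryQF) : TernaryQF := f.adj.sdiv f.I₁

end TernaryQF

/- The adjoint of `f_q = x² + 4q` (`q.fq`) is `16·(D x² - q(z, -y))`, computed directly from
the cofactors. Every coefficient of `adj f_q` is divisible by `16 κ`, and `16 D = b·16b - 4c·16a`
lies in the ideal of the others, so the content is exactly `16 κ`. Dividing by `I₁ = -16 κ` is
then exact (κ divides each coefficient), and the binary form left at `x = 0` is `q` under
`(y, z) ↦ (z, -y)`. -/

theorem Int.mul_ediv_neg_mul {k : ℤ} (x m : ℤ) (hk : 0 < k) : k * x / -(k * m) = -(x / m) := by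
  rw [Int.ediv_neg, Int.mul_ediv_mul_of_pos _ _ hk]

theorem Int.neg_mul_ediv_neg_mul {k x m : ℤ} (hk : 0 < k) (h : m ∣ x) :
    -k * x / -(k * m) = x / m := by
  rw [neg_mul, Int.ediv_neg, Int.neg_ediv_of_dvd (mul_dvd_mul_left k h), neg_neg,
    Int.mul_ediv_mul_of_pos _ _ hk]

namespace BinaryQF

theorem dvd_content_iff {q : BinaryQF} {d : ℤ} :
    d ∣ q.content ↔ d ∣ q.a ∧ d ∣ q.b ∧ d ∣ q.c := by
  simp only [content, Int.dvd_coe_gcd_iff, and_assoc]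

theorem content_dvd_disc (q : BinaryQF) : q.content ∣ q.disc := by
  obtain ⟨ha, hb, hc⟩ := dvd_content_iff.mp (dvd_refl q.content)
  rw [disc, sq]
  exact dvd_sub (hb.mul_left _) (hc.mul_left _)

theorem content_mul (k : ℕ) (q : BinaryQF) :
    content ⟨k * q.a, k * q.b, k * q.c⟩ = k * q.content := by
  simp only [content, Int.gcd_mul_left, Int.natAbs_natCast]
  push_cast
  rw [Int.gcd_mul_left, Int.natAbs_natCast]
  push_cast
  rfl

def fq (q : BinaryQF) : TernaryQF := ⟨1, 4 * q.a, 4 * q.c, 4 * q.b, 0, 0⟩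

theorem equivGL_swap (a b c : ℤ) : EquivGL ⟨c, -b, a⟩ ⟨a, b, c⟩ := by
  refine ⟨!![0, 1; -1, 0], by simp [Matrix.det_fin_two_of], fun x y => ?_⟩
  simp only [eval, Matrix.of_apply, Matrix.cons_val', Matrix.cons_val_zero, Matrix.cons_val_one,
    Matrix.empty_val', Matrix.cons_val_fin_one]
  ring

end BinaryQF

namespace TernaryQF

theorem dvd_content_iff {f : TernaryQF} {d : ℤ} :
    d ∣ f.content ↔
      d ∣ f.a ∧ d ∣ f.b ∧ d ∣ f.c ∧ d ∣ f.r ∧ d ∣ f.s ∧ d ∣ f.t := by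
  simp only [content, Int.dvd_coe_gcd_iff, and_assoc]

theorem eval_zero_left (f : TernaryQF) (y z : ℤ) :
    f.eval 0 y z = BinaryQF.eval ⟨f.b, f.r, f.c⟩ y z := by
  simp only [eval, BinaryQF.eval]
  ring

variable (q : BinaryQF)

theorem disc_fq : q.fq.disc = 16 * q.disc := by
  simp only [BinaryQF.fq, disc, BinaryQF.disc]
  ring

theorem adj_fq :
    q.fq.adj = ⟨16 * q.disc, -16 * q.c, -16 * q.a, 16 * q.b, 0, 0⟩ := by
  simp only [BinaryQF.fq, adj, BinaryQF.disc, mk.injEq]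
  refine ⟨?_, ?_, ?_, ?_, ?_, ?_⟩ <;> ring

theorem content_adj_fq : q.fq.adj.content = 16 * q.content := by
  have h16 : BinaryQF.content ⟨16 * q.a, 16 * q.b, 16 * q.c⟩ = 16 * q.content := by
    exact_mod_cast BinaryQF.content_mul 16 q
  rw [adj_fq]
  refine Int.dvd_antisymm (Int.natCast_nonneg _) (by simp [BinaryQF.content]) ?_ ?_
  · obtain ⟨-, hc, ha, hb, -⟩ := dvd_content_iff.mp (dvd_refl
      (content ⟨16 * q.disc, -16 * q.c, -16 * q.a, 16 * q.b, 0, 0⟩))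
    rw [← h16]
    exact BinaryQF.dvd_content_iff.mpr ⟨by simpa using ha, hb, by simpa using hc⟩
  · obtain ⟨ha, hb, hc⟩ := BinaryQF.dvd_content_iff.mp (dvd_refl q.content)
    have scale {x : ℤ} (hx : q.content ∣ x) : 16 * q.content ∣ 16 * x :=
      mul_dvd_mul_left 16 hx
    exact dvd_content_iff.mpr ⟨scale q.content_dvd_disc, by simpa using scale hc,
      by simpa using scale ha, scale hb, dvd_zero _, dvd_zero _⟩

theorem I₁_fq : q.fq.I₁ = -16 * q.content := by
  rw [I₁, content_adj_fq, neg_mul]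

theorem FB_fq : q.fq.FB =
    ⟨-(q.disc / q.content), q.c / q.content, q.a / q.content, -(q.b / q.content), 0, 0⟩ := by
  obtain ⟨ha, -, hc⟩ := BinaryQF.dvd_content_iff.mp (dvd_refl q.content)
  rw [FB, I₁, content_adj_fq, adj_fq]
  simp only [sdiv, mk.injEq, Int.zero_ediv, and_true]
  exact ⟨Int.mul_ediv_neg_mul _ _ (by norm_num), Int.neg_mul_ediv_neg_mul (by norm_num) hc,
    Int.neg_mul_ediv_neg_mul (by norm_num) ha, Int.mul_ediv_neg_mul _ _ (by norm_num)⟩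

end TernaryQF

/-- For a binary form `q = [a,b,c]` of discriminant `D`, the ternary form
`f_q = x² + 4q(y,z) = [1,4a,4c,4b,0,0]` satisfies `disc f_q = 16D`,
`adj f_q = [16D,-16c,-16a,16b,0,0]`, so `content (adj f_q) = 16·gcd(a,b,c)`;
and if `q` is positive definite with content `κ`, then `I₁(f_q) = -16κ`,
`F_{f_q}^B = [-D/κ, c/κ, a/κ, -b/κ, 0, 0]`, whose restriction to `x = 0` is the
binary form `(c/κ)y² - (b/κ)yz + (a/κ)z²`, which is `GL₂(ℤ)`-equivalent to the
primitive form `(1/κ)q`. -/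
theorem fq_adjoint_and_reciprocal (a b c : ℤ) (D : ℤ) (hD : D = b ^ 2 - 4 * a * c)
    (fq : TernaryQF) (hfq : fq = ⟨1, 4 * a, 4 * c, 4 * b, 0, 0⟩) :
    fq.disc = 16 * D ∧
    fq.adj = ⟨16 * D, -16 * c, -16 * a, 16 * b, 0, 0⟩ ∧
    fq.adj.content = 16 * (Int.gcd (Int.gcd a b) c : ℤ) ∧
    ∀ κ : ℤ, BinaryQF.PosDef ⟨a, b, c⟩ → (Int.gcd (Int.gcd a b) c : ℤ) = κ →
      fq.I₁ = -16 * κ ∧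
      fq.FB = ⟨-(D / κ), c / κ, a / κ, -(b / κ), 0, 0⟩ ∧
      (∀ y z : ℤ, fq.FB.eval 0 y z =
        BinaryQF.eval ⟨c / κ, -(b / κ), a / κ⟩ y z) ∧
      BinaryQF.EquivGL ⟨c / κ, -(b / κ), a / κ⟩ ⟨a / κ, b / κ, c / κ⟩ := by
  subst hD
  obtain rfl : fq = BinaryQF.fq ⟨a, b, c⟩ := hfq
  refine ⟨TernaryQF.disc_fq ⟨a, b, c⟩, TernaryQF.adj_fq ⟨a, b, c⟩,
    TernaryQF.content_adj_fq ⟨a, b, c⟩, ?_⟩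
  rintro κ - rfl
  have hFB := TernaryQF.FB_fq ⟨a, b, c⟩
  exact ⟨TernaryQF.I₁_fq ⟨a, b, c⟩, hFB,
    fun y z => by rw [TernaryQF.eval_zero_left, hFB]; rfl, BinaryQF.equivGL_swap _ _ _⟩
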